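/- arXiv:2603.14419 — 3 statements merged into one kernel-verified Lean document; each statement's English description precedes it below -/
import Mathlib

section
/- Let T1 : Fin m1 × Fin n1 → α and T2 : Fin m2 × Fin n2 → α be tables and let M be a consistent alignment between T1 and T2. Then there exists a permutation tuple π = (σ1, τ1, σ2, τ2) such that |O_π| ≥ |M|. -/
/-- The overlap `O_π` of tables `T1`, `T2` under the permutation tuple
`π = (σ1, τ1, σ2, τ2)`: the set of positions `(i, j)` with `i < min m1 m2`,
`j < min n1 n2` where the permuted cell values agree. -/
def overlap {α : Type*} [DecidableEq α] {m1 n1 m2 n2 : ℕ}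
    (T1 : Fin m1 × Fin n1 → α) (T2 : Fin m2 × Fin n2 → α)
    (σ1 : Equiv.Perm (Fin m1)) (τ1 : Equiv.Perm (Fin n1))
    (σ2 : Equiv.Perm (Fin m2)) (τ2 : Equiv.Perm (Fin n2)) :
    Finset (Fin (min m1 m2) × Fin (min n1 n2)) :=
  Finset.univ.filter fun p =>
    T1 (σ1 (Fin.castLE (min_le_left m1 m2) p.1), τ1 (Fin.castLE (min_le_left n1 n2) p.2)) =
    T2 (σ2 (Fin.castLE (min_le_right m1 m2) p.1), τ2 (Fin.castLE (min_le_right n1 n2) p.2))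

/-- The SALTO value: the maximum of `|O_π|` over all permutation tuples `π`. -/
def salto {α : Type*} [DecidableEq α] {m1 n1 m2 n2 : ℕ}
    (T1 : Fin m1 × Fin n1 → α) (T2 : Fin m2 × Fin n2 → α) : ℕ :=
  Finset.univ.sup fun π : Equiv.Perm (Fin m1) × Equiv.Perm (Fin n1) ×
      Equiv.Perm (Fin m2) × Equiv.Perm (Fin n2) =>
    (overlap T1 T2 π.1 π.2.1 π.2.2.1 π.2.2.2).card

/-- A consistent alignment between tables `T1` and `T2`: a set of pairs of cell
positions such that matched cells have equal values, and row (resp. column)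
coincidence in the first table holds iff it holds in the second. -/
def ConsistentAlignment {α : Type*} {m1 n1 m2 n2 : ℕ}
    (T1 : Fin m1 × Fin n1 → α) (T2 : Fin m2 × Fin n2 → α)
    (M : Set ((Fin m1 × Fin n1) × (Fin m2 × Fin n2))) : Prop :=
  ∀ p ∈ M, ∀ q ∈ M,
    T1 p.1 = T2 p.2 ∧ (p.1.1 = q.1.1 ↔ p.2.1 = q.2.1) ∧ (p.1.2 = q.1.2 ↔ p.2.2 = q.2.2)

lemma exists_perm_extend {m r : ℕ} (hr : r ≤ m) (f : Fin r ↪ Fin m) :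
    ∃ σ : Equiv.Perm (Fin m), ∀ k : Fin r, σ ⟨k.1, lt_of_lt_of_le k.2 hr⟩ = f k := by
  classical
  let e0 : {i : Fin m // i.1 < r} ≃ Fin r :=
    ⟨fun x => ⟨x.1.1, x.2⟩, fun k => ⟨⟨k.1, lt_of_lt_of_le k.2 hr⟩, k.2⟩,
      fun x => by ext; rfl, fun k => by ext; rfl⟩
  let e : {i : Fin m // i.1 < r} ≃ {i : Fin m // i ∈ Set.range f} :=
    e0.trans (Equiv.ofInjective f f.injective)
  refine ⟨e.extendSubtype, fun k => ?_⟩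
  have hk : ((⟨k.1, lt_of_lt_of_le k.2 hr⟩ : Fin m)).1 < r := k.2
  rw [Equiv.extendSubtype_apply_of_mem e _ hk]
  simp [e, e0, Equiv.ofInjective]

/-- **Every consistent alignment is dominated by some overlap.**
For every consistent alignment `M` between `T1` and `T2`, there is a
permutation tuple `π = (σ1, τ1, σ2, τ2)` with `|O_π| ≥ |M|`. -/
theorem consistentAlignment_le_overlap {α : Type*} [DecidableEq α] {m1 n1 m2 n2 : ℕ}
    (T1 : Fin m1 × Fin n1 → α) (T2 : Fin m2 × Fin n2 → α)
    (M : Finset ((Fin m1 × Fin n1) × (Fin m2 × Fin n2)))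
    (hM : ConsistentAlignment T1 T2 (M : Set _)) :
    ∃ (σ1 : Equiv.Perm (Fin m1)) (τ1 : Equiv.Perm (Fin n1))
      (σ2 : Equiv.Perm (Fin m2)) (τ2 : Equiv.Perm (Fin n2)),
      M.card ≤ (overlap T1 T2 σ1 τ1 σ2 τ2).card := by
  classical
  set A : Finset (Fin m1) := M.image (fun p => p.1.1) with hAdef
  set B : Finset (Fin n1) := M.image (fun p => p.1.2) with hBdef
  -- row map
  have hrowex : ∀ a : A, ∃ b : Fin m2, ∀ p ∈ M, p.1.1 = a.1 → p.2.1 = b := by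
    rintro ⟨a, ha⟩
    obtain ⟨q, hq, hq1⟩ := Finset.mem_image.mp ha
    refine ⟨q.2.1, fun p hp hp1 => ?_⟩
    exact ((hM p hp q hq).2.1).mp (by rw [hp1, hq1])
  choose rowMap hrowMap using hrowex
  have hcolex : ∀ b : B, ∃ c : Fin n2, ∀ p ∈ M, p.1.2 = b.1 → p.2.2 = c := by
    rintro ⟨b, hb⟩
    obtain ⟨q, hq, hq1⟩ := Finset.mem_image.mp hb
    refine ⟨q.2.2, fun p hp hp1 => ?_⟩
    exact ((hM p hp q hq).2.2).mp (by rw [hp1, hq1])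
  choose colMap hcolMap using hcolex
  have hrowInj : Function.Injective rowMap := by
    rintro a b h
    obtain ⟨p, hp, hp1⟩ := Finset.mem_image.mp a.2
    obtain ⟨q, hq, hq1⟩ := Finset.mem_image.mp b.2
    have h1 : p.2.1 = rowMap a := hrowMap a p hp hp1
    have h2 : q.2.1 = rowMap b := hrowMap b q hq hq1
    have : p.1.1 = q.1.1 := ((hM p hp q hq).2.1).mpr (by rw [h1, h2, h])
    exact Subtype.ext (by rw [← hp1, ← hq1, this])
  have hcolInj : Function.Injective colMap := by
    rintro a b h
    obtain ⟨p, hp, hp1⟩ := Finset.mem_image.mp a.2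
    obtain ⟨q, hq, hq1⟩ := Finset.mem_image.mp b.2
    have h1 : p.2.2 = colMap a := hcolMap a p hp hp1
    have h2 : q.2.2 = colMap b := hcolMap b q hq hq1
    have : p.1.2 = q.1.2 := ((hM p hp q hq).2.2).mpr (by rw [h1, h2, h])
    exact Subtype.ext (by rw [← hp1, ← hq1, this])
  set g1 := A.orderIsoOfFin rfl with hg1
  set g2 := B.orderIsoOfFin rfl with hg2
  have hr1 : A.card ≤ m1 := by simpa using A.card_le_univ
  have hc1 : B.card ≤ n1 := by simpa using B.card_le_univ
  have f1inj : Function.Injective (fun k : Fin A.card => (g1 k).1) := by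
    intro a b h
    exact g1.injective (Subtype.ext h)
  have f3inj : Function.Injective (fun k : Fin B.card => (g2 k).1) := by
    intro a b h
    exact g2.injective (Subtype.ext h)
  let f1 : Fin A.card ↪ Fin m1 := ⟨_, f1inj⟩
  let f2 : Fin A.card ↪ Fin m2 :=
    ⟨fun k => rowMap (g1 k), fun a b h => g1.injective (hrowInj h)⟩
  let f3 : Fin B.card ↪ Fin n1 := ⟨_, f3inj⟩
  let f4 : Fin B.card ↪ Fin n2 :=
    ⟨fun k => colMap (g2 k), fun a b h => g2.injective (hcolInj h)⟩
  have hr2 : A.card ≤ m2 := by simpa using Fintype.card_le_of_embedding f2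
  have hc2 : B.card ≤ n2 := by simpa using Fintype.card_le_of_embedding f4
  obtain ⟨σ1, hσ1⟩ := exists_perm_extend hr1 f1
  obtain ⟨σ2, hσ2⟩ := exists_perm_extend hr2 f2
  obtain ⟨τ1, hτ1⟩ := exists_perm_extend hc1 f3
  obtain ⟨τ2, hτ2⟩ := exists_perm_extend hc2 f4
  refine ⟨σ1, τ1, σ2, τ2, ?_⟩
  have hAmem : ∀ p : {p // p ∈ M}, p.1.1.1 ∈ A :=
    fun p => Finset.mem_image.mpr ⟨p.1, p.2, rfl⟩
  have hBmem : ∀ p : {p // p ∈ M}, p.1.1.2 ∈ B :=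
    fun p => Finset.mem_image.mpr ⟨p.1, p.2, rfl⟩
  let Φ : {p // p ∈ M} → Fin (min m1 m2) × Fin (min n1 n2) := fun p =>
    (⟨(g1.symm ⟨p.1.1.1, hAmem p⟩ : Fin A.card).1,
       lt_of_lt_of_le (Fin.is_lt _) (le_min hr1 hr2)⟩,
     ⟨(g2.symm ⟨p.1.1.2, hBmem p⟩ : Fin B.card).1,
       lt_of_lt_of_le (Fin.is_lt _) (le_min hc1 hc2)⟩)
  have key : ∀ p : {p // p ∈ M},
      σ1 (Fin.castLE (min_le_left m1 m2) (Φ p).1) = p.1.1.1 ∧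
      σ2 (Fin.castLE (min_le_right m1 m2) (Φ p).1) = p.1.2.1 ∧
      τ1 (Fin.castLE (min_le_left n1 n2) (Φ p).2) = p.1.1.2 ∧
      τ2 (Fin.castLE (min_le_right n1 n2) (Φ p).2) = p.1.2.2 := by
    intro p
    set kr := g1.symm ⟨p.1.1.1, hAmem p⟩ with hkr
    set kc := g2.symm ⟨p.1.1.2, hBmem p⟩ with hkc
    have e1 : Fin.castLE (min_le_left m1 m2) (Φ p).1 = ⟨kr.1, lt_of_lt_of_le kr.2 hr1⟩ := rfl
    have e2 : Fin.castLE (min_le_right m1 m2) (Φ p).1 = ⟨kr.1, lt_of_lt_of_le kr.2 hr2⟩ := rfl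
    have e3 : Fin.castLE (min_le_left n1 n2) (Φ p).2 = ⟨kc.1, lt_of_lt_of_le kc.2 hc1⟩ := rfl
    have e4 : Fin.castLE (min_le_right n1 n2) (Φ p).2 = ⟨kc.1, lt_of_lt_of_le kc.2 hc2⟩ := rfl
    have hg1k : g1 kr = ⟨p.1.1.1, hAmem p⟩ := g1.apply_symm_apply _
    have hg2k : g2 kc = ⟨p.1.1.2, hBmem p⟩ := g2.apply_symm_apply _
    refine ⟨?_, ?_, ?_, ?_⟩
    · rw [e1, hσ1 kr]; show (g1 kr).1 = _; rw [hg1k]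
    · rw [e2, hσ2 kr]; show rowMap (g1 kr) = _; rw [hg1k]
      exact (hrowMap ⟨p.1.1.1, hAmem p⟩ p.1 p.2 rfl).symm
    · rw [e3, hτ1 kc]; show (g2 kc).1 = _; rw [hg2k]
    · rw [e4, hτ2 kc]; show colMap (g2 kc) = _; rw [hg2k]
      exact (hcolMap ⟨p.1.1.2, hBmem p⟩ p.1 p.2 rfl).symm
  have hmaps : ∀ p : {p // p ∈ M}, Φ p ∈ overlap T1 T2 σ1 τ1 σ2 τ2 := by
    intro p
    obtain ⟨h1, h2, h3, h4⟩ := key p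
    simp only [overlap, Finset.mem_filter, Finset.mem_univ, true_and]
    rw [h1, h2, h3, h4]
    have := (hM p.1 p.2 p.1 p.2).1
    simpa using this
  have hinj : Function.Injective Φ := by
    intro p q h
    obtain ⟨hp1, hp2, hp3, hp4⟩ := key p
    obtain ⟨hq1, hq2, hq3, hq4⟩ := key q
    have h1 : (Φ p).1 = (Φ q).1 := by rw [h]
    have h2 : (Φ p).2 = (Φ q).2 := by rw [h]
    have e11 : p.1.1.1 = q.1.1.1 := by rw [← hp1, ← hq1, h1]
    have e21 : p.1.2.1 = q.1.2.1 := by rw [← hp2, ← hq2, h1]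
    have e12 : p.1.1.2 = q.1.1.2 := by rw [← hp3, ← hq3, h2]
    have e22 : p.1.2.2 = q.1.2.2 := by rw [← hp4, ← hq4, h2]
    exact Subtype.ext (Prod.ext (Prod.ext e11 e12) (Prod.ext e21 e22))
  calc M.card = M.attach.card := (Finset.card_attach).symm
    _ ≤ (overlap T1 T2 σ1 τ1 σ2 τ2).card :=
      Finset.card_le_card_of_injOn Φ (fun p _ => hmaps p)
        (fun p _ q _ h => hinj h)
end

section
/- For any tables T1 : Fin m1 × Fin n1 → α and T2 : Fin m2 × Fin n2 → α, the SALTO value of (T1, T2), i.e. the maximum of |O_π| over all permutation tuples π, equals the maximum of |M| over all consistent alignments M between T1 and T2. -/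
/-!
A permutation tuple `π` matches the cells it places at each position of `O_π`; these pairs form a
consistent alignment of size `|O_π|`. Conversely, consistency says exactly that an alignment `M`
matches rows of `T1` to rows of `T2` by a partial bijection, and likewise columns. Permuting both
tables so that these partial bijections lie on the diagonal places every pair of `M` at a
position of the overlap, so `|M| ≤ |O_π|`.
-/

open Equiv Finset

theorem Finset.exists_perms_diag_of_fst_eq_iff_snd_eq {a b : ℕ} (S : Finset (Fin a × Fin b))
    (hS : ∀ x ∈ S, ∀ y ∈ S, x.1 = y.1 ↔ x.2 = y.2) :
    ∃ (σ : Perm (Fin a)) (τ : Perm (Fin b)), ∀ x ∈ S, ∃ i : Fin (min a b),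
      σ (Fin.castLE (min_le_left a b) i) = x.1 ∧ τ (Fin.castLE (min_le_right a b) i) = x.2 := by
  have hfst : Set.InjOn Prod.fst (S : Set (Fin a × Fin b)) := fun x hx y hy h =>
    Prod.ext h ((hS x hx y hy).1 h)
  have hsnd : Set.InjOn Prod.snd (S : Set (Fin a × Fin b)) := fun x hx y hy h =>
    Prod.ext ((hS x hx y hy).2 h) h
  have hka : S.card ≤ a := by
    simpa using card_le_card_of_injOn Prod.fst (fun _ _ => mem_univ _) hfst
  have hkb : S.card ≤ b := by
    simpa using card_le_card_of_injOn Prod.snd (fun _ _ => mem_univ _) hsnd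
  let d : S → Fin (min a b) := fun x => Fin.castLE (le_min hka hkb) (S.equivFin x)
  have hd : Function.Injective d := (Fin.castLE_injective _).comp S.equivFin.injective
  obtain ⟨σ, hσ⟩ := Perm.exists_extending_pair (fun x => Fin.castLE (min_le_left a b) (d x))
    (fun x : S => x.1.1) ((Fin.castLE_injective _).comp hd) hfst.injective
  obtain ⟨τ, hτ⟩ := Perm.exists_extending_pair (fun x => Fin.castLE (min_le_right a b) (d x))
    (fun x : S => x.1.2) ((Fin.castLE_injective _).comp hd) hsnd.injective
  exact ⟨σ, τ, fun x hx => ⟨d ⟨x, hx⟩, hσ _, hτ _⟩⟩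

section Tables

variable {α : Type*} {m1 n1 m2 n2 : ℕ}

def permutedCells (σ1 : Perm (Fin m1)) (τ1 : Perm (Fin n1)) (σ2 : Perm (Fin m2))
    (τ2 : Perm (Fin n2)) (p : Fin (min m1 m2) × Fin (min n1 n2)) :
    (Fin m1 × Fin n1) × (Fin m2 × Fin n2) :=
  ((σ1 (Fin.castLE (min_le_left m1 m2) p.1), τ1 (Fin.castLE (min_le_left n1 n2) p.2)),
   (σ2 (Fin.castLE (min_le_right m1 m2) p.1), τ2 (Fin.castLE (min_le_right n1 n2) p.2)))

variable (σ1 : Perm (Fin m1)) (τ1 : Perm (Fin n1)) (σ2 : Perm (Fin m2)) (τ2 : Perm (Fin n2))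

theorem permutedCells_injective : Function.Injective (permutedCells σ1 τ1 σ2 τ2) := by
  intro p q h
  simp only [permutedCells, Prod.mk.injEq, EmbeddingLike.apply_eq_iff_eq, Fin.castLE_inj] at h
  exact Prod.ext h.1.1 h.1.2

variable [DecidableEq α] (T1 : Fin m1 × Fin n1 → α) (T2 : Fin m2 × Fin n2 → α)

theorem mem_overlap {p : Fin (min m1 m2) × Fin (min n1 n2)} :
    p ∈ overlap T1 T2 σ1 τ1 σ2 τ2 ↔
      T1 (permutedCells σ1 τ1 σ2 τ2 p).1 = T2 (permutedCells σ1 τ1 σ2 τ2 p).2 := by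
  simp [overlap, permutedCells]

theorem consistentAlignment_image_overlap :
    ConsistentAlignment T1 T2
      ((overlap T1 T2 σ1 τ1 σ2 τ2).image (permutedCells σ1 τ1 σ2 τ2) : Set _) := by
  simp only [coe_image]
  rintro _ ⟨p, hp, rfl⟩ _ ⟨q, hq, rfl⟩
  refine ⟨(mem_overlap σ1 τ1 σ2 τ2 T1 T2).1 hp, ?_, ?_⟩ <;>
    simp [permutedCells, Fin.castLE_inj]

theorem card_overlap_le_salto : (overlap T1 T2 σ1 τ1 σ2 τ2).card ≤ salto T1 T2 :=
  le_sup (f := fun π : Perm (Fin m1) × Perm (Fin n1) × Perm (Fin m2) × Perm (Fin n2) =>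
    (overlap T1 T2 π.1 π.2.1 π.2.2.1 π.2.2.2).card) (mem_univ (σ1, τ1, σ2, τ2))

theorem exists_card_overlap_eq_salto :
    ∃ (σ1 : Perm (Fin m1)) (τ1 : Perm (Fin n1)) (σ2 : Perm (Fin m2)) (τ2 : Perm (Fin n2)),
      (overlap T1 T2 σ1 τ1 σ2 τ2).card = salto T1 T2 := by
  obtain ⟨⟨σ1, τ1, σ2, τ2⟩, -, h⟩ := exists_mem_eq_sup univ univ_nonempty
    fun π : Perm (Fin m1) × Perm (Fin n1) × Perm (Fin m2) × Perm (Fin n2) =>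
      (overlap T1 T2 π.1 π.2.1 π.2.2.1 π.2.2.2).card
  exact ⟨σ1, τ1, σ2, τ2, h.symm⟩

theorem ConsistentAlignment.exists_subset_image_overlap
    {M : Finset ((Fin m1 × Fin n1) × (Fin m2 × Fin n2))}
    (hM : ConsistentAlignment T1 T2 (M : Set _)) :
    ∃ (σ1 : Perm (Fin m1)) (τ1 : Perm (Fin n1)) (σ2 : Perm (Fin m2)) (τ2 : Perm (Fin n2)),
      M ⊆ (overlap T1 T2 σ1 τ1 σ2 τ2).image (permutedCells σ1 τ1 σ2 τ2) := by
  obtain ⟨σ1, σ2, hrows⟩ :=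
    (M.image fun p => (p.1.1, p.2.1)).exists_perms_diag_of_fst_eq_iff_snd_eq
      (forall_mem_image.2 fun p hp => forall_mem_image.2 fun q hq => (hM p hp q hq).2.1)
  obtain ⟨τ1, τ2, hcols⟩ :=
    (M.image fun p => (p.1.2, p.2.2)).exists_perms_diag_of_fst_eq_iff_snd_eq
      (forall_mem_image.2 fun p hp => forall_mem_image.2 fun q hq => (hM p hp q hq).2.2)
  refine ⟨σ1, τ1, σ2, τ2, fun p hp => ?_⟩
  obtain ⟨i, hσ1, hσ2⟩ := hrows _ (mem_image_of_mem _ hp)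
  obtain ⟨j, hτ1, hτ2⟩ := hcols _ (mem_image_of_mem _ hp)
  have hcells : permutedCells σ1 τ1 σ2 τ2 (i, j) = p := by
    simp only [permutedCells, hσ1, hσ2, hτ1, hτ2]
  refine mem_image.2 ⟨(i, j), (mem_overlap σ1 τ1 σ2 τ2 T1 T2).2 ?_, hcells⟩
  rw [hcells]
  exact (hM p hp p hp).1

end Tables

/-- **SALTO equals the maximum size of a consistent alignment.**
The SALTO value of `(T1, T2)` is the greatest element of the set of sizes of
consistent alignments between `T1` and `T2`. -/
theorem salto_eq_max_consistentAlignment {α : Type*} [DecidableEq α] {m1 n1 m2 n2 : ℕ}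
    (T1 : Fin m1 × Fin n1 → α) (T2 : Fin m2 × Fin n2 → α) :
    IsGreatest {k : ℕ | ∃ M : Finset ((Fin m1 × Fin n1) × (Fin m2 × Fin n2)),
        ConsistentAlignment T1 T2 (M : Set _) ∧ M.card = k}
      (salto T1 T2) := by
  constructor
  · obtain ⟨σ1, τ1, σ2, τ2, h⟩ := exists_card_overlap_eq_salto T1 T2
    refine ⟨_, consistentAlignment_image_overlap σ1 τ1 σ2 τ2 T1 T2, ?_⟩
    rw [card_image_of_injective _ (permutedCells_injective σ1 τ1 σ2 τ2), h]
  · rintro _ ⟨M, hM, rfl⟩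
    obtain ⟨σ1, τ1, σ2, τ2, hsub⟩ := hM.exists_subset_image_overlap
    calc M.card ≤ ((overlap T1 T2 σ1 τ1 σ2 τ2).image (permutedCells σ1 τ1 σ2 τ2)).card :=
          card_le_card hsub
      _ ≤ (overlap T1 T2 σ1 τ1 σ2 τ2).card := card_image_le
      _ ≤ salto T1 T2 := card_overlap_le_salto σ1 τ1 σ2 τ2 T1 T2
end

section
/- Let T1 : Fin m1 × Fin n1 → α and T2 : Fin m2 × Fin n2 → α be tables with m2 ≤ m1 and n2 ≤ n1. Then the SALTO value of (T1, T2) equals the maximum of |O_π| over permutation tuples π of the restricted form (σ1, τ1, id, id), i.e. with the row and column permutations of the smaller table T2 fixed to the identity. -/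
/-! The overlap size is invariant under relabelling the common positions, provided the rows
and columns of both tables are permuted compatibly. Since `m2 ≤ m1` and `n2 ≤ n1`, every position
of `T2` is common, so relabelling by `σ2⁻¹` and `τ2⁻¹` leaves `T2` unpermuted; the relabelling
extends to permutations of the rows and columns of `T1`, which are absorbed into `σ1` and `τ1`. -/

theorem Equiv.Perm.exists_extend_along_embedding {α β : Type*} [Fintype α] [DecidableEq β]
    (f : α ↪ β) (ρ : Equiv.Perm α) : ∃ ρ' : Equiv.Perm β, ∀ a, ρ' (f a) = f (ρ a) :=
  ⟨ρ.viaFintypeEmbedding f, ρ.viaFintypeEmbedding_apply_image f⟩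

theorem Fin.exists_perm_castLE_of_eq {a b : ℕ} (h : a = b) (σ : Equiv.Perm (Fin b)) :
    ∃ ρ : Equiv.Perm (Fin a), ∀ i, σ (Fin.castLE h.le i) = Fin.castLE h.le (ρ i) :=
  ⟨(finCongr h).symm.permCongr σ, fun _ => rfl⟩

theorem card_overlap_mul_of_extends {α : Type*} [DecidableEq α] {m1 n1 m2 n2 : ℕ}
    (T1 : Fin m1 × Fin n1 → α) (T2 : Fin m2 × Fin n2 → α)
    (σ1 : Equiv.Perm (Fin m1)) (τ1 : Equiv.Perm (Fin n1))
    (σ2 : Equiv.Perm (Fin m2)) (τ2 : Equiv.Perm (Fin n2))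
    {ρ : Equiv.Perm (Fin (min m1 m2))} {κ : Equiv.Perm (Fin (min n1 n2))}
    {ρ1 : Equiv.Perm (Fin m1)} {κ1 : Equiv.Perm (Fin n1)}
    {ρ2 : Equiv.Perm (Fin m2)} {κ2 : Equiv.Perm (Fin n2)}
    (hρ1 : ∀ i, ρ1 (Fin.castLE (min_le_left m1 m2) i) = Fin.castLE (min_le_left m1 m2) (ρ i))
    (hκ1 : ∀ j, κ1 (Fin.castLE (min_le_left n1 n2) j) = Fin.castLE (min_le_left n1 n2) (κ j))
    (hρ2 : ∀ i, ρ2 (Fin.castLE (min_le_right m1 m2) i) = Fin.castLE (min_le_right m1 m2) (ρ i))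
    (hκ2 : ∀ j, κ2 (Fin.castLE (min_le_right n1 n2) j) = Fin.castLE (min_le_right n1 n2) (κ j)) :
    (overlap T1 T2 (σ1 * ρ1) (τ1 * κ1) (σ2 * ρ2) (τ2 * κ2)).card =
      (overlap T1 T2 σ1 τ1 σ2 τ2).card :=
  Finset.card_equiv (ρ.prodCongr κ) fun p => by
    simp [overlap, Equiv.Perm.mul_apply, hρ1, hκ1, hρ2, hκ2]

/-- **It suffices to permute the larger table.** If `m2 ≤ m1` and `n2 ≤ n1`,
then the SALTO value of `(T1, T2)` is already attained by permutation tuples of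
the form `(σ1, τ1, id, id)`, i.e. fixing the smaller table `T2`. -/
theorem salto_eq_sup_fix_smaller {α : Type*} [DecidableEq α] {m1 n1 m2 n2 : ℕ}
    (T1 : Fin m1 × Fin n1 → α) (T2 : Fin m2 × Fin n2 → α)
    (hm : m2 ≤ m1) (hn : n2 ≤ n1) :
    salto T1 T2 =
      Finset.univ.sup fun p : Equiv.Perm (Fin m1) × Equiv.Perm (Fin n1) =>
        (overlap T1 T2 p.1 p.2 (Equiv.refl (Fin m2)) (Equiv.refl (Fin n2))).card := by
  set fixSmaller := fun p : Equiv.Perm (Fin m1) × Equiv.Perm (Fin n1) =>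
    (overlap T1 T2 p.1 p.2 (Equiv.refl (Fin m2)) (Equiv.refl (Fin n2))).card
  refine le_antisymm (Finset.sup_le ?_) (Finset.sup_le ?_)
  · rintro ⟨σ1, τ1, σ2, τ2⟩ -
    obtain ⟨ρ, hρ2⟩ := Fin.exists_perm_castLE_of_eq (min_eq_right hm) σ2⁻¹
    obtain ⟨κ, hκ2⟩ := Fin.exists_perm_castLE_of_eq (min_eq_right hn) τ2⁻¹
    obtain ⟨ρ1, hρ1⟩ := ρ.exists_extend_along_embedding (Fin.castLEEmb (min_le_left m1 m2))
    obtain ⟨κ1, hκ1⟩ := κ.exists_extend_along_embedding (Fin.castLEEmb (min_le_left n1 n2))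
    calc (overlap T1 T2 σ1 τ1 σ2 τ2).card
        = (overlap T1 T2 (σ1 * ρ1) (τ1 * κ1) (σ2 * σ2⁻¹) (τ2 * τ2⁻¹)).card :=
          (card_overlap_mul_of_extends T1 T2 σ1 τ1 σ2 τ2 hρ1 hκ1 hρ2 hκ2).symm
      _ = fixSmaller (σ1 * ρ1, τ1 * κ1) := by simp only [mul_inv_cancel]; rfl
      _ ≤ Finset.univ.sup fixSmaller := Finset.le_sup (Finset.mem_univ _)
  · rintro ⟨σ1, τ1⟩ -
    exact Finset.le_sup (f := fun π : Equiv.Perm (Fin m1) × Equiv.Perm (Fin n1) ×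
        Equiv.Perm (Fin m2) × Equiv.Perm (Fin n2) =>
      (overlap T1 T2 π.1 π.2.1 π.2.2.1 π.2.2.2).card) (Finset.mem_univ (σ1, τ1, 1, 1))
end
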